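/- arXiv:2501.11316 — 2 statements merged into one kernel-verified Lean document; each statement's English description precedes it below -/
import Mathlib

section
/- Let 𝔞, 𝔟 ∈ {0,1}, let q be a positive integer, and let n1, n2 be integers coprime to q. Then Σ_{χ ≠ χ0, χ(−1)=(−1)^𝔞} χ(n1)·conj(χ)(n2)/f_χ^𝔟 = (1/2) Σ_{d | q, d > 1} d^{−𝔟} · ( Σ_{l | d, n1 ≡ n2 (mod l)} φ(l)μ(d/l) + (−1)^𝔞 Σ_{l | d, n1 ≡ −n2 (mod l)} φ(l)μ(d/l) ), where the sum on the left runs over nonprincipal Dirichlet characters χ modulo q with χ(−1) = (−1)^𝔞. Moreover, if gcd(n1·n2, q) ≠ 1 then the left-hand side vanishes. -/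
/-!
Group the characters by conductor. The characters mod `q` whose conductor divides `l ∣ q` are
exactly the lifts of the characters mod `l`, so orthogonality mod `l`, weighted by the parity
indicator `(1 + (-1)^𝔞 χ(-1)) / 2`, evaluates their contribution as
`½ (φ(l) [n1 ≡ n2 (l)] + (-1)^𝔞 φ(l) [n1 ≡ -n2 (l)])`. Möbius inversion over the divisors of `d`
isolates the characters of conductor exactly `d`, and `χ ≠ χ₀` means `f_χ > 1`.
If `n1 n2` is not coprime to `q`, then `χ(n1) χ(n2) = χ(n1 n2) = 0` for every `χ`.
-/

open Complex DirichletCharacter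

open ArithmeticFunction in
theorem Finset.sum_filter_eq_sum_divisors_moebius_mul {ι R : Type*} [CommRing R]
    (s : Finset ι) (c : ι → ℕ) (F : ι → R) {d : ℕ} (hd : 0 < d) :
    ∑ i ∈ s with c i = d, F i =
      ∑ l ∈ d.divisors, (moebius (d / l) : R) * ∑ i ∈ s with c i ∣ l, F i := by
  have hsum : ∀ n > 0, ∑ k ∈ n.divisors, ∑ i ∈ s with c i = k, F i = ∑ i ∈ s with c i ∣ n, F i := by
    intro n hn
    simp only [Finset.sum_filter]
    rw [Finset.sum_comm]
    simp [Nat.mem_divisors, hn.ne']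
  rw [← sum_eq_iff_sum_mul_moebius_eq.mp hsum d hd,
    Nat.sum_divisorsAntidiagonal' fun i j => (moebius i : R) * ∑ x ∈ s with c x ∣ j, F x]

namespace DirichletCharacter

lemma changeLevel_apply_neg_one {R : Type*} [CommMonoidWithZero R] {n m : ℕ} (hm : n ∣ m)
    (χ : DirichletCharacter R n) : changeLevel hm χ (-1) = χ (-1) := by
  simpa using changeLevel_eq_cast_of_dvd' χ hm (a := -1) isCoprime_one_left.neg_left

section Conductor

variable {R : Type*} [CommMonoidWithZero R] {q : ℕ} [NeZero q]

lemma one_lt_conductor_iff_ne_one (χ : DirichletCharacter R q) : 1 < χ.conductor ↔ χ ≠ 1 := by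
  have := χ.conductor_ne_zero
  rw [Ne, eq_one_iff_conductor_eq_one]
  omega

lemma conductor_dvd_iff_exists_changeLevel {m : ℕ} (hm : m ∣ q) (χ : DirichletCharacter R q) :
    χ.conductor ∣ m ↔ ∃ ψ : DirichletCharacter R m, changeLevel hm ψ = χ := by
  rw [← mem_conductorSet_iff_conductor_dvd χ hm, mem_conductorSet_iff]
  exact ⟨fun ⟨_, ψ, h⟩ => ⟨ψ, h.symm⟩, fun ⟨ψ, h⟩ => ⟨hm, ψ, h.symm⟩⟩

end Conductor

section Sums

variable {R : Type*} [CommRing R] [IsDomain R] {q : ℕ} [NeZero q] {M : Type*} [AddCommMonoid M]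

lemma sum_filter_conductor_dvd_eq_sum_changeLevel {m : ℕ} (hm : m ∣ q)
    (F : DirichletCharacter R q → M) :
    ∑ χ with χ.conductor ∣ m, F χ = ∑ ψ : DirichletCharacter R m, F (changeLevel hm ψ) := by
  classical
  rw [← Finset.sum_image (changeLevel_injective hm).injOn]
  congr 1
  ext χ
  simp [conductor_dvd_iff_exists_changeLevel hm]

lemma sum_filter_conductor_eq_sum_divisors (P : ℕ → Prop) [DecidablePred P]
    (G : DirichletCharacter R q → ℕ → M) :
    ∑ χ with P χ.conductor, G χ χ.conductor =
      ∑ d ∈ q.divisors with P d, ∑ χ with χ.conductor = d, G χ d := by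
  rw [← Finset.sum_fiberwise_of_maps_to (g := conductor) (t := q.divisors.filter P)]
  · refine Finset.sum_congr rfl fun d hd => ?_
    rw [Finset.filter_filter]
    refine Finset.sum_congr ?_ fun χ hχ => by rw [(Finset.mem_filter.mp hχ).2]
    ext χ
    simp only [Finset.mem_filter, Finset.mem_univ, true_and, and_iff_right_iff_imp]
    rintro rfl
    exact (Finset.mem_filter.mp hd).2
  · intro χ hχ
    exact Finset.mem_filter.mpr ⟨Nat.mem_divisors.mpr ⟨χ.conductor_dvd_level, NeZero.ne q⟩,
      (Finset.mem_filter.mp hχ).2⟩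

end Sums

lemma star_apply_of_isUnit {m : ℕ} (χ : DirichletCharacter ℂ m) {y : ZMod m} (hy : IsUnit y) :
    star (χ y) = χ y⁻¹ := by
  obtain ⟨u, rfl⟩ := hy
  rw [MulChar.star_apply', MulChar.inv_apply, Ring.inverse_unit, ZMod.inv_coe_unit]

theorem sum_parity_mul_conj_eq {m : ℕ} [NeZero m] (a : ℕ) (x : ZMod m) {y : ZMod m}
    (hy : IsUnit y) :
    (∑ χ : DirichletCharacter ℂ m,
        if χ (-1) = (-1 : ℂ) ^ a then χ x * starRingEnd ℂ (χ y) else 0) =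
      1 / 2 * ((if x = y then (m.totient : ℂ) else 0) +
        (-1) ^ a * (if x = -y then (m.totient : ℂ) else 0)) := by
  -- `χ (-1)` and `(-1) ^ a` are both `±1`, so the parity condition has indicator
  -- `(1 + (-1) ^ a * χ (-1)) / 2`.
  have hterm : ∀ χ : DirichletCharacter ℂ m,
      (if χ (-1) = (-1 : ℂ) ^ a then χ x * starRingEnd ℂ (χ y) else 0) =
        1 / 2 * (χ y⁻¹ * χ x + (-1) ^ a * (χ y⁻¹ * χ (-x))) := by
    intro χ
    rw [starRingEnd_apply, star_apply_of_isUnit χ hy, neg_eq_neg_one_mul x, map_mul]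
    rcases χ.even_or_odd with hχ | hχ <;> rcases a.even_or_odd with ha | ha <;>
      simp only [show χ (-1) = _ from hχ, ha.neg_one_pow] <;> norm_num <;> ring
  simp only [hterm, ← Finset.mul_sum, Finset.sum_add_distrib,
    sum_char_inv_mul_char_eq ℂ hy, eq_comm (a := y), neg_eq_iff_eq_neg]

theorem sum_filter_conductor_dvd_parity_mul_conj_eq {q : ℕ} [NeZero q] (a : ℕ) {l : ℕ} (hl : l ∣ q)
    {n1 n2 : ℤ} (h1 : IsCoprime n1 q) (h2 : IsCoprime n2 q) :
    (∑ χ : DirichletCharacter ℂ q with χ.conductor ∣ l,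
        if χ (-1) = (-1 : ℂ) ^ a then χ n1 * starRingEnd ℂ (χ n2) else 0) =
      1 / 2 * ((if (n1 : ZMod l) = n2 then (l.totient : ℂ) else 0) +
        (-1) ^ a * (if (n1 : ZMod l) = -n2 then (l.totient : ℂ) else 0)) := by
  have : NeZero l := ⟨ne_zero_of_dvd_ne_zero (NeZero.ne q) hl⟩
  have hunit : IsUnit (n2 : ZMod l) := (ZMod.coe_int_isUnit_iff_isCoprime n2 l).mpr
    (h2.of_isCoprime_of_dvd_right (Int.natCast_dvd_natCast.mpr hl)).symm
  simp only [sum_filter_conductor_dvd_eq_sum_changeLevel hl, changeLevel_apply_neg_one,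
    changeLevel_eq_cast_of_dvd' _ hl h1, changeLevel_eq_cast_of_dvd' _ hl h2]
  exact sum_parity_mul_conj_eq a _ hunit

lemma apply_mul_conj_apply_eq_zero {q : ℕ} (χ : DirichletCharacter ℂ q) {n1 n2 : ℤ}
    (h : ¬IsCoprime (n1 * n2) q) : χ n1 * starRingEnd ℂ (χ n2) = 0 := by
  have hχ : χ (n1 * n2 : ℤ) = 0 := (apply_eq_zero_iff χ _).mpr h
  rw [Int.cast_mul, map_mul, mul_eq_zero] at hχ
  rcases hχ with hχ | hχ <;> simp [hχ]

end DirichletCharacter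

open scoped Classical in
theorem character_orthogonality_with_conductor_general
    (a b : ℕ) (q : ℕ) [NeZero q] (n1 n2 : ℤ) :
    (Int.gcd n1 q = 1 → Int.gcd n2 q = 1 →
      (∑ χ : DirichletCharacter ℂ q,
          if χ ≠ 1 ∧ χ (-1) = (-1 : ℂ) ^ a then
            χ (n1 : ZMod q) * (starRingEnd ℂ) (χ (n2 : ZMod q)) / (χ.conductor : ℂ) ^ b
          else 0) =
        (1 / 2 : ℂ) * ∑ d ∈ q.divisors.filter (fun d => 1 < d),
          ((d : ℂ) ^ b)⁻¹ *
            ((∑ l ∈ d.divisors.filter (fun l => (n1 : ZMod l) = (n2 : ZMod l)),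
                (l.totient : ℂ) * (ArithmeticFunction.moebius (d / l) : ℂ)) +
              (-1 : ℂ) ^ a *
                ∑ l ∈ d.divisors.filter (fun l => (n1 : ZMod l) = -(n2 : ZMod l)),
                  (l.totient : ℂ) * (ArithmeticFunction.moebius (d / l) : ℂ))) ∧
    (Int.gcd (n1 * n2) q ≠ 1 →
      (∑ χ : DirichletCharacter ℂ q,
          if χ ≠ 1 ∧ χ (-1) = (-1 : ℂ) ^ a then
            χ (n1 : ZMod q) * (starRingEnd ℂ) (χ (n2 : ZMod q)) / (χ.conductor : ℂ) ^ b
          else 0) = 0) := by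
  refine ⟨fun h1 h2 => ?_, fun h => Finset.sum_eq_zero fun χ _ => ?_⟩
  · set F : DirichletCharacter ℂ q → ℂ := fun χ =>
      if χ (-1) = (-1 : ℂ) ^ a then χ n1 * starRingEnd ℂ (χ n2) else 0
    have hcop1 : IsCoprime n1 q := Int.isCoprime_iff_gcd_eq_one.mpr h1
    have hcop2 : IsCoprime n2 q := Int.isCoprime_iff_gcd_eq_one.mpr h2
    calc _ = ∑ χ with 1 < χ.conductor, F χ / (χ.conductor : ℂ) ^ b := by
          rw [Finset.sum_filter]
          refine Finset.sum_congr rfl fun χ _ => ?_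
          simp only [F, one_lt_conductor_iff_ne_one, ite_and]
          split_ifs <;> simp
      _ = ∑ d ∈ q.divisors with 1 < d, ((d : ℂ) ^ b)⁻¹ * ∑ χ with χ.conductor = d, F χ := by
          rw [sum_filter_conductor_eq_sum_divisors (1 < ·) fun χ d => F χ / (d : ℂ) ^ b]
          simp only [div_eq_inv_mul, Finset.mul_sum]
      _ = _ := by
          rw [Finset.mul_sum]
          refine Finset.sum_congr rfl fun d hd => ?_
          have hdq : d ∣ q := Nat.dvd_of_mem_divisors (Finset.mem_filter.mp hd).1
          rw [Finset.sum_filter_eq_sum_divisors_moebius_mul _ _ _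
              (Nat.pos_of_dvd_of_pos hdq q.pos_of_neZero),
            Finset.sum_congr rfl fun l hl => by rw [sum_filter_conductor_dvd_parity_mul_conj_eq a
              ((Nat.dvd_of_mem_divisors hl).trans hdq) hcop1 hcop2]]
          simp only [Finset.sum_filter, Finset.mul_sum, ← Finset.sum_add_distrib]
          refine Finset.sum_congr rfl fun l _ => ?_
          split_ifs <;> ring
  · simp [apply_mul_conj_apply_eq_zero χ (mt Int.isCoprime_iff_gcd_eq_one.mp h)]

open scoped Classical in
/-- character orthogonality involving conductors. For `𝔞, 𝔟 ∈ {0,1}`,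
a positive integer `q` and integers `n1, n2` coprime to `q`,
`Σ_{χ ≠ χ0, χ(−1)=(−1)^𝔞} χ(n1) conj(χ)(n2) / f_χ^𝔟
  = (1/2) Σ_{d ∣ q, d>1} d^{−𝔟} ( Σ_{l ∣ d, n1 ≡ n2 [l]} φ(l)μ(d/l)
      + (−1)^𝔞 Σ_{l ∣ d, n1 ≡ −n2 [l]} φ(l)μ(d/l) )`,
and the left-hand side vanishes whenever `gcd(n1 n2, q) ≠ 1`. -/
theorem character_orthogonality_with_conductor
    (a b : ℕ) (ha : a ≤ 1) (hb : b ≤ 1) (q : ℕ) [NeZero q] (n1 n2 : ℤ) :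
    (Int.gcd n1 q = 1 → Int.gcd n2 q = 1 →
      (∑ χ : DirichletCharacter ℂ q,
          if χ ≠ 1 ∧ χ (-1) = (-1 : ℂ) ^ a then
            χ (n1 : ZMod q) * (starRingEnd ℂ) (χ (n2 : ZMod q)) / (χ.conductor : ℂ) ^ b
          else 0) =
        (1 / 2 : ℂ) * ∑ d ∈ q.divisors.filter (fun d => 1 < d),
          ((d : ℂ) ^ b)⁻¹ *
            ((∑ l ∈ d.divisors.filter (fun l => (n1 : ZMod l) = (n2 : ZMod l)),
                (l.totient : ℂ) * (ArithmeticFunction.moebius (d / l) : ℂ)) +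
              (-1 : ℂ) ^ a *
                ∑ l ∈ d.divisors.filter (fun l => (n1 : ZMod l) = -(n2 : ZMod l)),
                  (l.totient : ℂ) * (ArithmeticFunction.moebius (d / l) : ℂ))) ∧
    (Int.gcd (n1 * n2) q ≠ 1 →
      (∑ χ : DirichletCharacter ℂ q,
          if χ ≠ 1 ∧ χ (-1) = (-1 : ℂ) ^ a then
            χ (n1 : ZMod q) * (starRingEnd ℂ) (χ (n2 : ZMod q)) / (χ.conductor : ℂ) ^ b
          else 0) = 0) :=
  character_orthogonality_with_conductor_general a b q n1 n2
end

section
/- Let χ1 be a nonprincipal real Dirichlet character modulo q such that L(s,χ1) has a real simple zero β1 ∈ (1/2, 1), and suppose there are constants c2, A, B > 0 with c2 sufficiently small such that A·|s−β1| ≤ |L(s,χ1)| ≤ B·|s−β1|·(log q)^2 for all s with |s−β1| ≤ c2/log(2q). Then for every X > e, the residue at s = β1 of the function g(s) = X^{s−1}·Γ(s−1)/L(s,χ1)^2 (a double pole), namely lim_{s→β1} d/ds[ (s−β1)^2 · X^{s−1}Γ(s−1)/L(s,χ1)^2 ], satisfies |Res(g; β1)| ≪ X^{β1−1} · (1−β1)^{−1}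 · ( log q + log X + (1−β1)^{−1} ), with implied constant depending only on A, B, c2. -/
/-!
Dividing `L(s)` by `s - β₁` (that is, passing to `dslope L β₁`) turns `(s - β₁)² g(s)` into a
function `h` holomorphic near `β₁`, so the residue is `h'(β₁)`. On the circle of radius
`ρ = min(c₂ / log 2q, (1 - β₁)/2, 1 / log X)` the lower bound on `L` gives `|dslope L β₁| ≥ A`,
while `|X^{s-1}| ≤ e X^{β₁-1}` and, `Γ` having a simple pole at `0`, `|Γ(s-1)| ≪ (1 - β₁)⁻¹`.
Cauchy's estimate `|h'(β₁)| ≤ max |h| / ρ` and `ρ⁻¹ ≪ log q + log X + (1 - β₁)⁻¹` conclude.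
-/

open Complex DirichletCharacter Filter Topology Metric

lemma Complex.ne_neg_natCast_of_re_pos {w : ℂ} (hw : 0 < w.re) (m : ℕ) : w ≠ -m := by
  rintro rfl
  simp only [neg_re, natCast_re, Left.neg_pos_iff] at hw
  exact (Nat.cast_nonneg m).not_gt hw

lemma Complex.ne_neg_natCast_of_norm_lt_one {w : ℂ} (hw₀ : w ≠ 0) (hw : ‖w‖ < 1) (m : ℕ) :
    w ≠ -m := by
  rintro rfl
  rcases Nat.eq_zero_or_pos m with rfl | hm
  · simp at hw₀
  · simp only [norm_neg, Complex.norm_natCast] at hw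
    exact absurd hw (not_lt.2 (by exact_mod_cast hm))

lemma Complex.exists_norm_Gamma_le_div_norm {R : ℝ} (hR : R < 1) :
    ∃ M > 0, ∀ w : ℂ, w ≠ 0 → ‖w‖ ≤ R → ‖Gamma w‖ ≤ M / ‖w‖ := by
  have hcont : ContinuousOn Gamma (closedBall 1 R) := by
    intro w hw
    have hre : 0 < w.re := by
      have := (abs_re_le_norm (w - 1)).trans (mem_closedBall_iff_norm.1 hw)
      simp only [sub_re, one_re] at this
      linarith [(abs_le.1 this).1]
    exact (differentiableAt_Gamma w (ne_neg_natCast_of_re_pos hre)).continuousAt.continuousWithinAt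
  obtain ⟨M, hM⟩ := (isCompact_closedBall (1 : ℂ) R).exists_bound_of_continuousOn hcont
  refine ⟨max M 1, by positivity, fun w hw₀ hw ↦ ?_⟩
  have hw1 : w + 1 ∈ closedBall 1 R := by simpa [dist_eq_norm] using hw
  rw [le_div_iff₀ (norm_pos_iff.2 hw₀), ← norm_mul, mul_comm, ← Gamma_add_one w hw₀]
  exact (hM _ hw1).trans (le_max_left _ _)

lemma Complex.differentiableAt_Gamma_of_norm_lt_one {w : ℂ} (hw₀ : w ≠ 0) (hw : ‖w‖ < 1) :
    DifferentiableAt ℂ Gamma w :=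
  differentiableAt_Gamma w (ne_neg_natCast_of_norm_lt_one hw₀ hw)

lemma Complex.norm_ofReal_cpow_le_exp_one_mul_rpow {X : ℝ} (hX : 1 < X) {z w : ℂ}
    (hz : ‖z - w‖ ≤ (Real.log X)⁻¹) : ‖(X : ℂ) ^ z‖ ≤ Real.exp 1 * X ^ w.re := by
  have hX₀ : 0 < X := by linarith
  have hre : z.re ≤ w.re + (Real.log X)⁻¹ := by
    have := (re_le_norm (z - w)).trans hz
    simp only [sub_re] at this
    linarith
  rw [norm_cpow_eq_rpow_re_of_pos hX₀]
  calc X ^ z.re ≤ X ^ (w.re + (Real.log X)⁻¹) := Real.rpow_le_rpow_of_exponent_le hX.le hre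
    _ = Real.exp 1 * X ^ w.re := by
      rw [Real.rpow_add hX₀, Real.rpow_def_of_pos hX₀ (Real.log X)⁻¹,
        mul_inv_cancel₀ (Real.log_pos hX).ne', mul_comm]

section dslope

variable {𝕜 E : Type*} [NontriviallyNormedField 𝕜] [NormedAddCommGroup E] [NormedSpace 𝕜 E]
  {f : 𝕜 → E} {a b : 𝕜}

lemma norm_dslope_of_ne (hf : f a = 0) (hb : b ≠ a) :
    ‖dslope f a b‖ = ‖f b‖ / ‖b - a‖ := by
  rw [dslope_of_ne f hb, slope_def_module, hf, sub_zero, norm_smul, norm_inv, inv_mul_eq_div]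

lemma le_norm_dslope {C : ℝ} (hf : f a = 0) (hb : b ≠ a) (hC : C * ‖b - a‖ ≤ ‖f b‖) :
    C ≤ ‖dslope f a b‖ := by
  rwa [norm_dslope_of_ne hf hb, le_div_iff₀ (norm_pos_iff.2 (sub_ne_zero.2 hb))]

end dslope

lemma sq_sub_mul_div_sq_eq_div_dslope_sq {𝕜 : Type*} [NontriviallyNormedField 𝕜] {f : 𝕜 → 𝕜}
    {a b : 𝕜} (hf : f a = 0) (hb : b ≠ a) (c : 𝕜) :
    (b - a) ^ 2 * c / f b ^ 2 = c / dslope f a b ^ 2 := by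
  rw [dslope_of_ne f hb, slope_def_field, hf, sub_zero, div_pow, div_div_eq_mul_div, mul_comm]

lemma eq_deriv_of_tendsto_deriv_nhdsNE {𝕜 F : Type*} [NontriviallyNormedField 𝕜]
    [NormedAddCommGroup F] [NormedSpace 𝕜 F] [CompleteSpace F] {f g : 𝕜 → F} {a : 𝕜} {r : F}
    (hfg : ∀ x ≠ a, f x = g x) (hg : AnalyticAt 𝕜 g a)
    (hr : Tendsto (deriv f) (𝓝[≠] a) (𝓝 r)) : r = deriv g a := by
  have hderiv : deriv f =ᶠ[𝓝[≠] a] deriv g :=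
    eventually_nhdsWithin_of_forall fun x hx ↦ Filter.EventuallyEq.deriv_eq <|
      eventually_of_mem (isOpen_compl_singleton.mem_nhds hx) hfg
  exact tendsto_nhds_unique (hr.congr' hderiv)
    (hg.deriv.continuousAt.tendsto.mono_left nhdsWithin_le_nhds)

lemma inv_min_min_le_add {a b c : ℝ} (ha : 0 < a) (hb : 0 < b) (hc : 0 < c) :
    (min a (min b c))⁻¹ ≤ a⁻¹ + b⁻¹ + c⁻¹ := by
  have ha' := inv_pos.2 ha
  have hb' := inv_pos.2 hb
  have hc' := inv_pos.2 hc
  rcases min_choice b c with h | h <;> rcases min_choice a (min b c) with h' | h' <;>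
    rw [h'] <;> try rw [h]
  all_goals linarith

/-- Off `β` this equals `(s - β)² X^{s-1} Γ(s-1) / L(s)²`, but it stays holomorphic at a simple
zero `β` of `L`. -/
noncomputable def regularizedIntegrand (L : ℂ → ℂ) (β : ℂ) (X : ℝ) (s : ℂ) : ℂ :=
  (X : ℂ) ^ (s - 1) * Gamma (s - 1) / dslope L β s ^ 2

section regularizedIntegrand

variable {L : ℂ → ℂ} {β X A ρ : ℝ}

lemma norm_sub_one_mem_Icc (hβ : 1 / 2 < β) (hβ1 : β < 1) {z : ℂ}
    (hz : ‖z - β‖ ≤ (1 - β) / 2) : (1 - β) / 2 ≤ ‖z - 1‖ ∧ ‖z - 1‖ ≤ 3 / 4 := by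
  have hβ1' : ‖(β : ℂ) - 1‖ = 1 - β := by
    rw [← ofReal_one, ← ofReal_sub, norm_real, Real.norm_of_nonpos (by linarith), neg_sub]
  have hle := norm_sub_le_norm_sub_add_norm_sub z (β : ℂ) 1
  have hge := norm_sub_le_norm_sub_add_norm_sub (β : ℂ) z 1
  rw [norm_sub_rev (β : ℂ) z] at hge
  constructor <;> linarith

lemma differentiableOn_regularizedIntegrand (hL : Differentiable ℂ L) (hLβ : L β = 0)
    (hL'β : deriv L β ≠ 0) (hβ : 1 / 2 < β) (hβ1 : β < 1) (hX : X ≠ 0) (hA : 0 < A)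
    (hρ : ρ ≤ (1 - β) / 2) (hlow : ∀ s : ℂ, ‖s - β‖ ≤ ρ → A * ‖s - β‖ ≤ ‖L s‖) :
    DifferentiableOn ℂ (regularizedIntegrand L β X) (closedBall β ρ) := by
  intro s hs
  have hsβ : ‖s - β‖ ≤ ρ := mem_closedBall_iff_norm.1 hs
  obtain ⟨hs₀, hs₁⟩ := norm_sub_one_mem_Icc hβ hβ1 (hsβ.trans hρ)
  have hdslope_ne : dslope L β s ≠ 0 := by
    rcases eq_or_ne s β with rfl | hne
    · rwa [dslope_same]
    · exact norm_pos_iff.1 (hA.trans_le (le_norm_dslope hLβ hne (hlow s hsβ)))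
  have hdslope : DifferentiableAt ℂ (dslope L β) s :=
    ((differentiableOn_dslope univ_mem).2 hL.differentiableOn).differentiableAt univ_mem
  have hcpow : DifferentiableAt ℂ (fun s : ℂ ↦ (X : ℂ) ^ (s - 1)) s :=
    (differentiableAt_id.sub_const 1).const_cpow (Or.inl (ofReal_ne_zero.2 hX))
  have hGamma : DifferentiableAt ℂ (fun s : ℂ ↦ Gamma (s - 1)) s :=
    (differentiableAt_Gamma_of_norm_lt_one (norm_pos_iff.1 (by linarith)) (by linarith)).comp s
      (differentiableAt_id.sub_const 1)
  exact ((hcpow.mul hGamma).div (hdslope.pow 2) (pow_ne_zero 2 hdslope_ne)).differentiableWithinAt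

lemma norm_regularizedIntegrand_le {M : ℝ} (hLβ : L β = 0) (hβ : 1 / 2 < β) (hβ1 : β < 1)
    (hX : 1 < X) (hA : 0 < A) (hM₀ : 0 ≤ M)
    (hM : ∀ w : ℂ, w ≠ 0 → ‖w‖ ≤ 3 / 4 → ‖Gamma w‖ ≤ M / ‖w‖)
    (hρβ : ρ ≤ (1 - β) / 2) (hρX : ρ ≤ (Real.log X)⁻¹) {z : ℂ} (hz : ‖z - β‖ ≤ ρ) (hzβ : z ≠ β)
    (hlow : A * ‖z - β‖ ≤ ‖L z‖) :
    ‖regularizedIntegrand L β X z‖ ≤ Real.exp 1 * X ^ (β - 1) * (2 * M / (1 - β)) / A ^ 2 := by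
  obtain ⟨hz₀, hz₁⟩ := norm_sub_one_mem_Icc hβ hβ1 (hz.trans hρβ)
  have hcpow : ‖(X : ℂ) ^ (z - 1)‖ ≤ Real.exp 1 * X ^ (β - 1) := by
    simpa using norm_ofReal_cpow_le_exp_one_mul_rpow hX (w := β - 1) (by
      rw [sub_sub_sub_cancel_right]; exact hz.trans hρX)
  have hGamma : ‖Gamma (z - 1)‖ ≤ 2 * M / (1 - β) :=
    calc ‖Gamma (z - 1)‖ ≤ M / ‖z - 1‖ :=
          hM _ (norm_pos_iff.1 (by linarith)) hz₁
      _ ≤ M / ((1 - β) / 2) := div_le_div_of_nonneg_left hM₀ (by linarith) hz₀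
      _ = 2 * M / (1 - β) := by field_simp
  have hdslope : A ^ 2 ≤ ‖dslope L β z‖ ^ 2 :=
    pow_le_pow_left₀ hA.le (le_norm_dslope hLβ hzβ hlow) 2
  rw [regularizedIntegrand, norm_div, norm_mul, norm_pow]
  gcongr

lemma norm_deriv_regularizedIntegrand_le {M : ℝ} (hL : Differentiable ℂ L) (hLβ : L β = 0)
    (hL'β : deriv L β ≠ 0) (hβ : 1 / 2 < β) (hβ1 : β < 1) (hX : 1 < X) (hA : 0 < A)
    (hM₀ : 0 ≤ M) (hM : ∀ w : ℂ, w ≠ 0 → ‖w‖ ≤ 3 / 4 → ‖Gamma w‖ ≤ M / ‖w‖)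
    (hρ : 0 < ρ) (hρβ : ρ ≤ (1 - β) / 2) (hρX : ρ ≤ (Real.log X)⁻¹)
    (hlow : ∀ s : ℂ, ‖s - β‖ ≤ ρ → A * ‖s - β‖ ≤ ‖L s‖) :
    ‖deriv (regularizedIntegrand L β X) β‖ ≤
      Real.exp 1 * X ^ (β - 1) * (2 * M / (1 - β)) / A ^ 2 / ρ := by
  refine norm_deriv_le_of_forall_mem_sphere_norm_le hρ (DifferentiableOn.diffContOnCl ?_)
    fun z hz ↦ ?_
  · rw [closure_ball _ hρ.ne']
    exact differentiableOn_regularizedIntegrand hL hLβ hL'β hβ hβ1 (by positivity) hA hρβ hlow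
  · have hzρ : ‖z - β‖ = ρ := mem_sphere_iff_norm.1 hz
    have hzβ : z ≠ β := by
      rintro rfl
      simp [hρ.ne] at hzρ
    exact norm_regularizedIntegrand_le hLβ hβ hβ1 hX hA hM₀ hM hρβ hρX hzρ.le hzβ
      (hlow z hzρ.le)

end regularizedIntegrand

lemma inv_min_div_log_le {q : ℕ} (hq : q ≠ 0) {c β X : ℝ} (hc : 0 < c) (hβ : β < 1)
    (hX : Real.exp 1 < X) :
    (min (c / Real.log (2 * q)) (min ((1 - β) / 2) (Real.log X)⁻¹))⁻¹ ≤
      (1 / c + 3) * (Real.log q + Real.log X + (1 - β)⁻¹) := by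
  have hq₁ : (1 : ℝ) ≤ q := by exact_mod_cast Nat.one_le_iff_ne_zero.2 hq
  have hlogX : 1 < Real.log X := by rwa [Real.lt_log_iff_exp_lt (by linarith [Real.exp_pos 1])]
  have hlog2q : Real.log (2 * q) < Real.log q + Real.log X := by
    rw [Real.log_mul two_ne_zero (by positivity)]
    linarith [Real.log_two_lt_d9]
  have hlog2q₀ : 0 < Real.log (2 * q) := Real.log_pos (by linarith)
  have hlogq := Real.log_nonneg hq₁
  have hβ' := inv_pos.2 (sub_pos.2 hβ)
  refine (inv_min_min_le_add (div_pos hc hlog2q₀) (by linarith) (by positivity)).trans ?_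
  rw [inv_div, inv_div, inv_inv, div_eq_mul_inv 2]
  have h2q : Real.log (2 * q) / c ≤ (Real.log q + Real.log X + (1 - β)⁻¹) / c := by
    gcongr
    linarith
  have hsplit : (1 / c + 3) * (Real.log q + Real.log X + (1 - β)⁻¹) =
      (Real.log q + Real.log X + (1 - β)⁻¹) / c + 3 * (Real.log q + Real.log X + (1 - β)⁻¹) := by
    ring
  linarith

/-- Let `χ1` be a nonprincipal real Dirichlet character mod `q` whose
`L`-function has a real simple zero `β1 ∈ (1/2, 1)`, and suppose
`A|s−β1| ≤ |L(s,χ1)| ≤ B|s−β1|(log q)²` on the disc `|s−β1| ≤ c2/log(2q)` with `c2`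
sufficiently small. Then for `X > e` the residue at `β1` of
`g(s) = X^{s−1} Γ(s−1)/L(s,χ1)²`, namely `lim_{s→β1} d/ds[(s−β1)² g(s)]`, satisfies
`|Res(g;β1)| ≪ X^{β1−1}(1−β1)⁻¹(log q + log X + (1−β1)⁻¹)`, the implied constant depending
only on `A`, `B`, `c2`. -/
theorem residue_at_exceptional_zero_bound :
    ∃ csmall > (0 : ℝ), ∀ c2 A B : ℝ, 0 < c2 → c2 ≤ csmall → 0 < A → 0 < B →
      ∃ K > (0 : ℝ), ∀ (q : ℕ) [NeZero q], ∀ (χ1 : DirichletCharacter ℂ q) (β1 : ℝ) (X : ℝ),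
        χ1 ≠ 1 → (∀ a : ZMod q, (starRingEnd ℂ) (χ1 a) = χ1 a) →
        1 / 2 < β1 → β1 < 1 →
        χ1.LFunction (β1 : ℂ) = 0 → deriv χ1.LFunction (β1 : ℂ) ≠ 0 →
        (∀ s : ℂ, ‖s - (β1 : ℂ)‖ ≤ c2 / Real.log (2 * q) →
          A * ‖s - (β1 : ℂ)‖ ≤ ‖χ1.LFunction s‖ ∧
            ‖χ1.LFunction s‖ ≤ B * ‖s - (β1 : ℂ)‖ * (Real.log q) ^ 2) →
        Real.exp 1 < X →
        ∀ r : ℂ,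
          Tendsto (deriv fun s : ℂ =>
              (s - (β1 : ℂ)) ^ 2 * (X : ℂ) ^ (s - 1) * Complex.Gamma (s - 1) /
                (χ1.LFunction s) ^ 2)
            (𝓝[≠] (β1 : ℂ)) (𝓝 r) →
          ‖r‖ ≤ K * X ^ (β1 - 1) * (1 - β1)⁻¹ *
            (Real.log q + Real.log X + (1 - β1)⁻¹) := by
  obtain ⟨M, hM₀, hM⟩ := exists_norm_Gamma_le_div_norm (R := 3 / 4) (by norm_num)
  refine ⟨1, one_pos, fun c2 A B hc2 _ hA _ ↦
    ⟨Real.exp 1 * (2 * M) / A ^ 2 * (1 / c2 + 3), by positivity, ?_⟩⟩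
  intro q _ χ1 β1 X hχ1 _ hβ hβ1 hLβ hL'β hbound hX r hr
  have hX₁ : 1 < X := (Real.one_lt_exp_iff.2 one_pos).trans hX
  have hL := differentiable_LFunction hχ1
  set ρ := min (c2 / Real.log (2 * q)) (min ((1 - β1) / 2) (Real.log X)⁻¹)
  have hρ : 0 < ρ := by
    have hq : (1 : ℝ) < 2 * q := by
      have : (1 : ℝ) ≤ q := by exact_mod_cast Nat.one_le_iff_ne_zero.2 (NeZero.ne q)
      linarith
    exact lt_min (div_pos hc2 (Real.log_pos hq)) (lt_min (by linarith)
      (inv_pos.2 (Real.log_pos hX₁)))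
  have hρβ : ρ ≤ (1 - β1) / 2 := (min_le_right _ _).trans (min_le_left _ _)
  have hρX : ρ ≤ (Real.log X)⁻¹ := (min_le_right _ _).trans (min_le_right _ _)
  have hlow : ∀ s : ℂ, ‖s - β1‖ ≤ ρ → A * ‖s - β1‖ ≤ ‖χ1.LFunction s‖ :=
    fun s hs ↦ (hbound s (hs.trans (min_le_left _ _))).1
  have hr_eq : r = deriv (regularizedIntegrand χ1.LFunction β1 X) β1 := by
    refine eq_deriv_of_tendsto_deriv_nhdsNE (fun s hs ↦ ?_) ?_ hr
    · rw [mul_assoc _ _ (Gamma _), sq_sub_mul_div_sq_eq_div_dslope_sq hLβ hs,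
        regularizedIntegrand]
    · exact (differentiableOn_regularizedIntegrand hL hLβ hL'β hβ hβ1 (by positivity) hA hρβ
        hlow).analyticAt (closedBall_mem_nhds _ hρ)
  rw [hr_eq]
  calc _ ≤ Real.exp 1 * X ^ (β1 - 1) * (2 * M / (1 - β1)) / A ^ 2 / ρ :=
        norm_deriv_regularizedIntegrand_le hL hLβ hL'β hβ hβ1 hX₁ hA hM₀.le hM hρ hρβ hρX hlow
    _ ≤ Real.exp 1 * X ^ (β1 - 1) * (2 * M / (1 - β1)) / A ^ 2 *
          ((1 / c2 + 3) * (Real.log q + Real.log X + (1 - β1)⁻¹)) := by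
      rw [div_eq_mul_inv _ ρ]
      gcongr
      exact inv_min_div_log_le (NeZero.ne q) hc2 hβ1 hX
    _ = _ := by ring
end
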